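/- Let r ≥ 0 and let (x_n) be a sequence in an S-metric space (X,S). Then st-LIM^r x_n is a closed set in the topology induced by the S-metric. -/

import Mathlib

/-!
If `x` is rough statistically convergent to `q` with degree `r`, the triangle inequality
`S(xₙ, xₙ, p) ≤ 2 S(q, q, p) + S(xₙ, xₙ, q)` makes it rough statistically convergent to `p` with
degree `r + 2 S(q, q, p)`. Since `st-LIM^r xₙ` is the intersection of the sets `st-LIM^(r + ε) xₙ`
over `ε > 0`, a point `p ∉ st-LIM^r xₙ` misses one of them, and then the whole ball
`B_S(p, ε / 2)` misses `st-LIM^r xₙ`.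
-/

open Filter

open scoped Classical in
/-- Natural density: `A ⊆ ℕ` has density `d` if `|{k ∈ A : k < n}|/n → d`. -/
def HasDensity (A : Set ℕ) (d : ℝ) : Prop :=
  Filter.Tendsto
    (fun n : ℕ => (((Finset.range n).filter (fun k => k ∈ A)).card : ℝ) / n)
    Filter.atTop (nhds d)

/-- `S` is an S-metric on `X`. -/
structure IsSMetric {X : Type*} (S : X → X → X → ℝ) : Prop where
  nonneg : ∀ x y z, 0 ≤ S x y z
  eq_zero_iff : ∀ x y z, S x y z = 0 ↔ x = y ∧ y = z
  triangle : ∀ x y z a, S x y z ≤ S x x a + S y y a + S z z a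

/-- Ordinary convergence of a sequence in an S-metric space. -/
def SConvergesTo {X : Type*} (S : X → X → X → ℝ) (x : ℕ → X) (l : X) : Prop :=
  ∀ ε : ℝ, 0 < ε → ∃ N : ℕ, ∀ n ≥ N, S (x n) (x n) l < ε

/-- Statistical convergence of a sequence in an S-metric space. -/
def SStatConvergesTo {X : Type*} (S : X → X → X → ℝ) (x : ℕ → X) (l : X) : Prop :=
  ∀ ε : ℝ, 0 < ε → HasDensity {n : ℕ | ε ≤ S (x n) (x n) l} 0

/-- Cauchy sequence in an S-metric space. -/
def SCauchy {X : Type*} (S : X → X → X → ℝ) (x : ℕ → X) : Prop :=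
  ∀ ε : ℝ, 0 < ε → ∃ k : ℕ, ∀ n ≥ k, ∀ m ≥ k, S (x n) (x n) (x m) < ε

/-- Statistically Cauchy sequence in an S-metric space. -/
def SStatCauchy {X : Type*} (S : X → X → X → ℝ) (x : ℕ → X) : Prop :=
  ∀ ε : ℝ, 0 < ε → ∃ N : ℕ, HasDensity {n : ℕ | ε ≤ S (x n) (x n) (x N)} 0

/-- Statistically bounded sequence in an S-metric space. -/
def SStatBounded {X : Type*} (S : X → X → X → ℝ) (x : ℕ → X) : Prop :=
  ∀ u : X, ∃ B : ℝ, 0 < B ∧ HasDensity {n : ℕ | B ≤ S (x n) (x n) u} 0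

/-- Rough convergence with roughness degree `r`. -/
def SRoughConvergesTo {X : Type*} (S : X → X → X → ℝ) (r : ℝ) (x : ℕ → X) (p : X) : Prop :=
  ∀ ε : ℝ, 0 < ε → ∃ k : ℕ, ∀ n ≥ k, S (x n) (x n) p < r + ε

/-- Rough statistical convergence with roughness degree `r`. -/
def SRoughStatConvergesTo {X : Type*} (S : X → X → X → ℝ) (r : ℝ) (x : ℕ → X) (p : X) : Prop :=
  ∀ ε : ℝ, 0 < ε → HasDensity {n : ℕ | r + ε ≤ S (x n) (x n) p} 0

/-- The rough statistical limit set `st-LIM^r x_n`. -/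
def stLIM {X : Type*} (S : X → X → X → ℝ) (r : ℝ) (x : ℕ → X) : Set X :=
  {p : X | SRoughStatConvergesTo S r x p}

/-- The topology on `X` generated by the open balls of the S-metric. -/
def sBallTopology {X : Type*} (S : X → X → X → ℝ) : TopologicalSpace X :=
  TopologicalSpace.generateFrom
    {B : Set X | ∃ c : X, ∃ ε : ℝ, 0 < ε ∧ B = {y : X | S y y c < ε}}

lemma HasDensity.zero_of_subset {A B : Set ℕ} (hB : HasDensity B 0) (hAB : A ⊆ B) :
    HasDensity A 0 :=
  squeeze_zero (fun _ => by positivity) (fun _ => by gcongr) hB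

namespace IsSMetric

variable {X : Type*} {S : X → X → X → ℝ}

lemma self_eq_zero (hS : IsSMetric S) (x : X) : S x x x = 0 :=
  (hS.eq_zero_iff x x x).mpr ⟨rfl, rfl⟩

lemma symm (hS : IsSMetric S) (x y : X) : S x x y = S y y x := by
  have hxy := hS.triangle x x y x
  have hyx := hS.triangle y y x y
  rw [hS.self_eq_zero] at hxy hyx
  linarith

lemma le_two_mul_add (hS : IsSMetric S) (x y z : X) : S x x z ≤ 2 * S y y z + S x x y := by
  have h := hS.triangle z z x y
  rw [hS.symm z x, hS.symm z y] at h
  linarith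

end IsSMetric

lemma isOpen_sBall {X : Type*} (S : X → X → X → ℝ) (c : X) {ε : ℝ} (hε : 0 < ε) :
    @IsOpen X (sBallTopology S) {y | S y y c < ε} :=
  TopologicalSpace.GenerateOpen.basic _ ⟨c, ε, hε, rfl⟩

namespace SRoughStatConvergesTo

variable {X : Type*} {S : X → X → X → ℝ} {r : ℝ} {x : ℕ → X} {p : X}

lemma mono {r' : ℝ} (h : SRoughStatConvergesTo S r x p) (hr : r ≤ r') :
    SRoughStatConvergesTo S r' x p := fun ε hε =>
  (h ε hε).zero_of_subset fun n (hn : r' + ε ≤ _) => show r + ε ≤ _ by linarith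

lemma of_forall_add_pos (h : ∀ δ > 0, SRoughStatConvergesTo S (r + δ) x p) :
    SRoughStatConvergesTo S r x p := fun ε hε => by
  simpa only [add_assoc, add_halves] using h (ε / 2) (half_pos hε) (ε / 2) (half_pos hε)

lemma of_near (hS : IsSMetric S) {q : X} (h : SRoughStatConvergesTo S r x q) (p : X) :
    SRoughStatConvergesTo S (r + 2 * S q q p) x p := fun ε hε =>
  (h ε hε).zero_of_subset fun n (hn : r + 2 * S q q p + ε ≤ _) => show r + ε ≤ _ by
    linarith [hS.le_two_mul_add (x n) q p]

end SRoughStatConvergesTo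

theorem stmt_15_general {X : Type*} (S : X → X → X → ℝ) (hS : IsSMetric S)
    (r : ℝ) (x : ℕ → X) :
    @IsClosed X (sBallTopology S) (stLIM S r x) := by
  let := sBallTopology S
  refine isOpen_compl_iff.mp (isOpen_iff_forall_mem_open.mpr fun p hp => ?_)
  obtain ⟨ε, hε, hpε⟩ : ∃ ε > 0, ¬SRoughStatConvergesTo S (r + ε) x p := by
    by_contra! hall
    exact hp (SRoughStatConvergesTo.of_forall_add_pos hall)
  refine ⟨{y | S y y p < ε / 2}, fun q (hq : S q q p < ε / 2) hqlim => hpε ?_,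
    isOpen_sBall S p (half_pos hε), show S p p p < ε / 2 by simp [hS.self_eq_zero, hε]⟩
  exact (hqlim.of_near hS p).mono (by linarith)

theorem stmt_15 {X : Type*} [Nonempty X] (S : X → X → X → ℝ) (hS : IsSMetric S)
    (r : ℝ) (hr : 0 ≤ r) (x : ℕ → X) :
    @IsClosed X (sBallTopology S) (stLIM S r x) :=
  stmt_15_general S hS r x
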